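/- arXiv:1210.5725 — 2 statements merged into one kernel-verified Lean document; each statement's English description precedes it below -/
import Mathlib

section
/- Let m and j be integers with 2 < j < m, and let r₁, r₂ ≥ 0 be integers such that every point of ℤ^{2^{m−1}} is at Manhattan distance at most r₁ from some point of Λ(m−1, j−1) and at Manhattan distance at most r₂ from some point of Λ(m−1, j). Then every point of ℤ^{2ᵐ} is at Manhattan distance at most r₁ + r₂ from some point of Λ(m, j). (In terms of covering radii: r(m, j) ≤ r(m−1, j−1) + r(m−1, j).) -/
/-- `Hmat m` : the `2^m × 2^m` matrix defined by `H₀ = [1]` and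
`H_{m+1} = [[Hₘ, Hₘ], [0, Hₘ]]` in block form. -/
def Hmat : (m : ℕ) → Matrix (Fin (2 ^ m)) (Fin (2 ^ m)) ℤ
  | 0 => Matrix.of fun _ _ => 1
  | m + 1 =>
      Matrix.reindex
        (finSumFinEquiv.trans (finCongr (by rw [pow_succ, mul_two] :
          2 ^ m + 2 ^ m = 2 ^ (m + 1))))
        (finSumFinEquiv.trans (finCongr (by rw [pow_succ, mul_two] :
          2 ^ m + 2 ^ m = 2 ^ (m + 1))))
        (Matrix.fromBlocks (Hmat m) (Hmat m) 0 (Hmat m))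

/-- `Smat m` : the `2^m × 2^m` Sylvester Hadamard matrix, `𝓗₀ = [1]`,
`𝓗_{m+1} = [[𝓗ₘ, 𝓗ₘ], [𝓗ₘ, −𝓗ₘ]]`. -/
def Smat : (m : ℕ) → Matrix (Fin (2 ^ m)) (Fin (2 ^ m)) ℤ
  | 0 => Matrix.of fun _ _ => 1
  | m + 1 =>
      Matrix.reindex
        (finSumFinEquiv.trans (finCongr (by rw [pow_succ, mul_two] :
          2 ^ m + 2 ^ m = 2 ^ (m + 1))))
        (finSumFinEquiv.trans (finCongr (by rw [pow_succ, mul_two] :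
          2 ^ m + 2 ^ m = 2 ^ (m + 1))))
        (Matrix.fromBlocks (Smat m) (Smat m) (Smat m) (-(Smat m)))

/-- Hamming weight of the `s`-th row of `Hmat m`. -/
def rowWeight (m : ℕ) (s : Fin (2 ^ m)) : ℕ :=
  (Finset.univ.filter (fun t => Hmat m s t ≠ 0)).card

/-- `Gmat m j` : the matrix whose `s`-th row is the `s`-th row of `Hmat m`
multiplied by `2^(j − ℓ)` (truncated subtraction) where `2^ℓ` is the Hamming
weight of that row. -/
def Gmat (m j : ℕ) : Matrix (Fin (2 ^ m)) (Fin (2 ^ m)) ℤ :=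
  Matrix.of fun s t => (2 : ℤ) ^ (j - Nat.log 2 (rowWeight m s)) * Hmat m s t

/-- The lattice generated by the rows of `G`. -/
def latticeOf {n : ℕ} (G : Matrix (Fin n) (Fin n) ℤ) : Set (Fin n → ℤ) :=
  { x | ∃ u : Fin n → ℤ, x = Matrix.vecMul u G }


/-!
Cutting `ℤ^{2^m}` into two halves, `G(m, j)` is block upper triangular with diagonal blocks
`G(m-1, j-1)` and `G(m-1, j)`: the rows of the top half of `Hₘ` have twice the weight of the
corresponding rows of `H_{m-1}`, so they are scaled one power of two less. Approximate the top
half of a point by `u₁ G(m-1, j-1)` within `r₁`, then approximate the bottom half, corrected by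
the off-diagonal contribution of `u₁`, by a point of `Λ(m-1, j)` within `r₂`.
-/

open Matrix

def CoversWithin {ι : Type*} [Fintype ι] (L : Set (ι → ℤ)) (r : ℤ) : Prop :=
  ∀ x : ι → ℤ, ∃ c ∈ L, ∑ i, |x i - c i| ≤ r

section Covering

variable {ι ι' κ κ' : Type*} [Fintype ι] [Fintype ι'] [Fintype κ] [Fintype κ']

theorem CoversWithin.range_vecMul_fromBlocks {A : Matrix ι ι' ℤ} (A' : Matrix ι κ' ℤ)
    {B : Matrix κ κ' ℤ} {r₁ r₂ : ℤ} (hA : CoversWithin (Set.range (vecMul · A)) r₁)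
    (hB : CoversWithin (Set.range (vecMul · B)) r₂) :
    CoversWithin (Set.range (vecMul · (fromBlocks A A' 0 B))) (r₁ + r₂) := by
  intro x
  obtain ⟨_, ⟨u₁, rfl⟩, h₁⟩ := hA (x ∘ Sum.inl)
  obtain ⟨_, ⟨u₂, rfl⟩, h₂⟩ := hB (x ∘ Sum.inr - vecMul u₁ A')
  refine ⟨_, ⟨Sum.elim u₁ u₂, rfl⟩, ?_⟩
  rw [Fintype.sum_sum_type]
  refine add_le_add (le_of_eq_of_le (Finset.sum_congr rfl fun i _ => ?_) h₁)
    (le_of_eq_of_le (Finset.sum_congr rfl fun k _ => ?_) h₂)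
  · simp [vecMul_fromBlocks]
  · simp [vecMul_fromBlocks, sub_sub]

theorem CoversWithin.range_vecMul_reindex {M : Matrix ι ι' ℤ} {r : ℤ}
    (hM : CoversWithin (Set.range (vecMul · M)) r) (e : ι ≃ κ) (e' : ι' ≃ κ') :
    CoversWithin (Set.range (vecMul · (reindex e e' M))) r := by
  intro x
  obtain ⟨_, ⟨u, rfl⟩, h⟩ := hM (x ∘ e')
  refine ⟨_, ⟨u ∘ e.symm, rfl⟩, le_of_eq_of_le ?_ h⟩
  rw [← e'.sum_comp]
  refine Finset.sum_congr rfl fun i _ => ?_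
  simp [vecMul, dotProduct, ← e.sum_comp]

end Covering

theorem latticeOf_eq_range {n : ℕ} (G : Matrix (Fin n) (Fin n) ℤ) :
    latticeOf G = Set.range (vecMul · G) := by
  ext x
  exact exists_congr fun _ => eq_comm

def finTwoPowSuccEquiv (n : ℕ) : Fin (2 ^ n) ⊕ Fin (2 ^ n) ≃ Fin (2 ^ (n + 1)) :=
  finSumFinEquiv.trans (finCongr (by rw [pow_succ, mul_two]))

theorem Hmat_succ (n : ℕ) :
    Hmat (n + 1) = reindex (finTwoPowSuccEquiv n) (finTwoPowSuccEquiv n)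
      (fromBlocks (Hmat n) (Hmat n) 0 (Hmat n)) :=
  rfl

theorem Hmat_succ_apply (n : ℕ) (p q : Fin (2 ^ n) ⊕ Fin (2 ^ n)) :
    Hmat (n + 1) (finTwoPowSuccEquiv n p) (finTwoPowSuccEquiv n q) =
      fromBlocks (Hmat n) (Hmat n) 0 (Hmat n) p q := by
  simp [Hmat_succ]

theorem Hmat_apply_self : ∀ (m : ℕ) (s : Fin (2 ^ m)), Hmat m s s = 1
  | 0, _ => rfl
  | m + 1, s => by
    obtain ⟨p, rfl⟩ := (finTwoPowSuccEquiv m).surjective s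
    cases p <;> simp [Hmat_succ_apply, Hmat_apply_self m]

theorem rowWeight_ne_zero (m : ℕ) (s : Fin (2 ^ m)) : rowWeight m s ≠ 0 :=
  Finset.card_ne_zero.mpr ⟨s, by simp [Hmat_apply_self]⟩

theorem rowWeight_eq_sum (m : ℕ) (s : Fin (2 ^ m)) :
    rowWeight m s = ∑ t, if Hmat m s t ≠ 0 then 1 else 0 :=
  Finset.card_filter _ _

theorem rowWeight_succ_inl (n : ℕ) (s : Fin (2 ^ n)) :
    rowWeight (n + 1) (finTwoPowSuccEquiv n (Sum.inl s)) = 2 * rowWeight n s := by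
  simp [rowWeight_eq_sum, ← (finTwoPowSuccEquiv n).sum_comp, Fintype.sum_sum_type,
    Hmat_succ_apply, two_mul]
  -- the two sides differ only in their `Decidable` instances
  rfl

theorem rowWeight_succ_inr (n : ℕ) (s : Fin (2 ^ n)) :
    rowWeight (n + 1) (finTwoPowSuccEquiv n (Sum.inr s)) = rowWeight n s := by
  simp [rowWeight_eq_sum, ← (finTwoPowSuccEquiv n).sum_comp, Fintype.sum_sum_type,
    Hmat_succ_apply]
  rfl

theorem Gmat_succ (n j : ℕ) :
    Gmat (n + 1) j = reindex (finTwoPowSuccEquiv n) (finTwoPowSuccEquiv n)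
      (fromBlocks (Gmat n (j - 1)) (Gmat n (j - 1)) 0 (Gmat n j)) := by
  have hlog (s : Fin (2 ^ n)) :
      j - Nat.log 2 (2 * rowWeight n s) = j - 1 - Nat.log 2 (rowWeight n s) := by
    rw [mul_comm, Nat.log_mul_base one_lt_two (rowWeight_ne_zero n s)]
    omega
  ext s t
  obtain ⟨p, rfl⟩ := (finTwoPowSuccEquiv n).surjective s
  obtain ⟨q, rfl⟩ := (finTwoPowSuccEquiv n).surjective t
  cases p <;> cases q <;>
    simp [Gmat, Hmat_succ_apply, rowWeight_succ_inl, rowWeight_succ_inr, hlog]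

theorem covering_radius_Gmj_recursion_general (m j : ℕ) (hjm : j < m)
    (r₁ r₂ : ℕ)
    (hr₁ : ∀ x : Fin (2 ^ (m - 1)) → ℤ,
      ∃ c ∈ latticeOf (Gmat (m - 1) (j - 1)), (∑ i, |x i - c i|) ≤ (r₁ : ℤ))
    (hr₂ : ∀ x : Fin (2 ^ (m - 1)) → ℤ,
      ∃ c ∈ latticeOf (Gmat (m - 1) j), (∑ i, |x i - c i|) ≤ (r₂ : ℤ)) :
    ∀ x : Fin (2 ^ m) → ℤ,
      ∃ c ∈ latticeOf (Gmat m j), (∑ i, |x i - c i|) ≤ (r₁ : ℤ) + (r₂ : ℤ) := by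
  obtain ⟨n, rfl⟩ : ∃ n, m = n + 1 := ⟨m - 1, by omega⟩
  simp only [latticeOf_eq_range] at hr₁ hr₂ ⊢
  rw [Gmat_succ]
  exact (CoversWithin.range_vecMul_fromBlocks _ hr₁ hr₂).range_vecMul_reindex _ _

/-- Covering-radius recursion for `Λ(m, j)`, `2 < j < m`: if every point of
`ℤ^{2^{m−1}}` is at Manhattan distance at most `r₁` from `Λ(m−1, j−1)` and at
Manhattan distance at most `r₂` from `Λ(m−1, j)`, then every point of `ℤ^{2^m}`
is at Manhattan distance at most `r₁ + r₂` from `Λ(m, j)`. -/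
theorem covering_radius_Gmj_recursion (m j : ℕ) (hj : 2 < j) (hjm : j < m)
    (r₁ r₂ : ℕ)
    (hr₁ : ∀ x : Fin (2 ^ (m - 1)) → ℤ,
      ∃ c ∈ latticeOf (Gmat (m - 1) (j - 1)), (∑ i, |x i - c i|) ≤ (r₁ : ℤ))
    (hr₂ : ∀ x : Fin (2 ^ (m - 1)) → ℤ,
      ∃ c ∈ latticeOf (Gmat (m - 1) j), (∑ i, |x i - c i|) ≤ (r₂ : ℤ)) :
    ∀ x : Fin (2 ^ m) → ℤ,
      ∃ c ∈ latticeOf (Gmat m j), (∑ i, |x i - c i|) ≤ (r₁ : ℤ) + (r₂ : ℤ) :=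
  covering_radius_Gmj_recursion_general m j hjm r₁ r₂ hr₁ hr₂
end

section
/- For all integers m ≥ 0 and 0 ≤ j ≤ m: for every x ∈ Λ(m, j), every entry of 𝓗ₘ·x (x regarded as a column vector) is divisible by 2ʲ, and the image of Λ(m, j) under the map x ↦ (1/2ʲ)·𝓗ₘ·x equals Λ(m, m−j); that is, { y ∈ ℤ^{2ᵐ} : 2ʲ·y = 𝓗ₘ·x for some x ∈ Λ(m, j) } = Λ(m, m−j). -/
/- ### auxiliary development -/

open Matrix in
def ee (m : ℕ) : Fin (2 ^ m) ⊕ Fin (2 ^ m) ≃ Fin (2 ^ (m + 1)) :=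
  finSumFinEquiv.trans (finCongr (by rw [pow_succ, mul_two]))

lemma Hmat_succ_s18 (m : ℕ) :
    Hmat (m + 1) = Matrix.reindex (ee m) (ee m)
      (Matrix.fromBlocks (Hmat m) (Hmat m) 0 (Hmat m)) := rfl

lemma Smat_succ (m : ℕ) :
    Smat (m + 1) = Matrix.reindex (ee m) (ee m)
      (Matrix.fromBlocks (Smat m) (Smat m) (Smat m) (-(Smat m))) := rfl

/-- row weights -/
lemma rowWeight_inl (m : ℕ) (s : Fin (2 ^ m)) :
    rowWeight (m + 1) (ee m (Sum.inl s)) = 2 * rowWeight m s := by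
  classical
  unfold rowWeight
  rw [Finset.card_filter, Finset.card_filter]
  rw [← Equiv.sum_comp (ee m) (fun t => if Hmat (m+1) (ee m (Sum.inl s)) t ≠ 0 then 1 else 0)]
  rw [Fintype.sum_sum_type]
  simp only [Hmat_succ_s18, Matrix.reindex_apply, Matrix.submatrix_apply, Equiv.symm_apply_apply,
    Matrix.fromBlocks_apply₁₁, Matrix.fromBlocks_apply₁₂]
  ring

lemma rowWeight_inr (m : ℕ) (s : Fin (2 ^ m)) :
    rowWeight (m + 1) (ee m (Sum.inr s)) = rowWeight m s := by
  classical
  unfold rowWeight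
  rw [Finset.card_filter, Finset.card_filter]
  rw [← Equiv.sum_comp (ee m) (fun t => if Hmat (m+1) (ee m (Sum.inr s)) t ≠ 0 then 1 else 0)]
  rw [Fintype.sum_sum_type]
  simp only [Hmat_succ_s18, Matrix.reindex_apply, Matrix.submatrix_apply, Equiv.symm_apply_apply,
    Matrix.fromBlocks_apply₂₁, Matrix.fromBlocks_apply₂₂]
  simp

lemma rowWeight_pos (m : ℕ) (s : Fin (2 ^ m)) : 0 < rowWeight m s := by
  induction m with
  | zero =>
      unfold rowWeight
      simp [Hmat]
  | succ m ih =>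
      obtain ⟨t, rfl⟩ := (ee m).surjective s
      cases t with
      | inl t => rw [rowWeight_inl]; exact Nat.mul_pos two_pos (ih t)
      | inr t => rw [rowWeight_inr]; exact ih t

lemma rowWeight_le (m : ℕ) (s : Fin (2 ^ m)) : rowWeight m s ≤ 2 ^ m := by
  calc rowWeight m s ≤ Finset.univ.card := Finset.card_filter_le _ _
  _ = 2 ^ m := by simp

/-- abbreviation for exponent -/
noncomputable def lw (m : ℕ) (s : Fin (2 ^ m)) : ℕ := Nat.log 2 (rowWeight m s)

lemma lw_le (m : ℕ) (s : Fin (2 ^ m)) : lw m s ≤ m := by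
  have := Nat.log_mono_right (b := 2) (rowWeight_le m s)
  rwa [Nat.log_pow one_lt_two] at this

lemma lw_inl (m : ℕ) (s : Fin (2 ^ m)) : lw (m+1) (ee m (Sum.inl s)) = lw m s + 1 := by
  unfold lw
  rw [rowWeight_inl, mul_comm,
    Nat.log_mul_base one_lt_two ((rowWeight_pos m s).ne')]

lemma lw_inr (m : ℕ) (s : Fin (2 ^ m)) : lw (m+1) (ee m (Sum.inr s)) = lw m s := by
  unfold lw; rw [rowWeight_inr]

lemma Gmat_apply (m j : ℕ) (s t : Fin (2 ^ m)) :
    Gmat m j s t = (2 : ℤ) ^ (j - lw m s) * Hmat m s t := rfl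

lemma Gmat_succ_s18 (m j : ℕ) :
    Gmat (m + 1) j = Matrix.reindex (ee m) (ee m)
      (Matrix.fromBlocks (Gmat m (j - 1)) (Gmat m (j - 1)) 0 (Gmat m j)) := by
  ext i i'
  obtain ⟨s, rfl⟩ := (ee m).surjective i
  obtain ⟨t, rfl⟩ := (ee m).surjective i'
  have hH := congrFun (congrFun (Hmat_succ_s18 m) (ee m s)) (ee m t)
  cases s with
  | inl s =>
    cases t with
    | inl t =>
      simp only [Gmat_apply, Matrix.reindex_apply, Matrix.submatrix_apply,
        Equiv.symm_apply_apply, Matrix.fromBlocks_apply₁₁, lw_inl] at hH ⊢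
      rw [hH, show j - (lw m s + 1) = j - 1 - lw m s from by omega]
    | inr t =>
      simp only [Gmat_apply, Matrix.reindex_apply, Matrix.submatrix_apply,
        Equiv.symm_apply_apply, Matrix.fromBlocks_apply₁₂, lw_inl] at hH ⊢
      rw [hH, show j - (lw m s + 1) = j - 1 - lw m s from by omega]
  | inr s =>
    cases t with
    | inl t =>
      simp only [Gmat_apply, Matrix.reindex_apply, Matrix.submatrix_apply,
        Equiv.symm_apply_apply, Matrix.fromBlocks_apply₂₁, Matrix.zero_apply] at hH ⊢
      rw [hH, mul_zero]
    | inr t =>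
      simp only [Gmat_apply, Matrix.reindex_apply, Matrix.submatrix_apply,
        Equiv.symm_apply_apply, Matrix.fromBlocks_apply₂₂, lw_inr] at hH ⊢
      rw [hH]

/- lattice closure properties -/
lemma lat_add {n : ℕ} {G : Matrix (Fin n) (Fin n) ℤ} {x y : Fin n → ℤ}
    (hx : x ∈ latticeOf G) (hy : y ∈ latticeOf G) : x + y ∈ latticeOf G := by
  obtain ⟨u, rfl⟩ := hx; obtain ⟨v, rfl⟩ := hy
  exact ⟨u + v, by rw [Matrix.add_vecMul]⟩

lemma lat_smul {n : ℕ} {G : Matrix (Fin n) (Fin n) ℤ} (c : ℤ) {x : Fin n → ℤ}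
    (hx : x ∈ latticeOf G) : c • x ∈ latticeOf G := by
  obtain ⟨u, rfl⟩ := hx
  exact ⟨c • u, by rw [Matrix.smul_vecMul]⟩

lemma lat_neg {n : ℕ} {G : Matrix (Fin n) (Fin n) ℤ} {x : Fin n → ℤ}
    (hx : x ∈ latticeOf G) : -x ∈ latticeOf G := by
  have := lat_smul (-1) hx; rwa [neg_one_smul] at this

/-- key scaling lemma: `2^d • Λ(m,k) ⊆ Λ(m,k')` whenever `k' ≤ k + d`. -/
lemma lat_scale {m k k' d : ℕ} (h : k' ≤ k + d) {x : Fin (2^m) → ℤ}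
    (hx : x ∈ latticeOf (Gmat m k)) : (2 : ℤ) ^ d • x ∈ latticeOf (Gmat m k') := by
  obtain ⟨u, rfl⟩ := hx
  refine ⟨fun s => 2 ^ (d + (k - lw m s) - (k' - lw m s)) * u s, funext fun t => ?_⟩
  simp only [Pi.smul_apply, Matrix.vecMul, dotProduct, smul_eq_mul, Finset.mul_sum]
  refine Finset.sum_congr rfl fun s _ => ?_
  rw [Gmat_apply, Gmat_apply]
  have hle : k' - lw m s ≤ d + (k - lw m s) := by omega
  rw [show (2:ℤ)^d * (u s * (2^(k - lw m s) * Hmat m s t))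
      = u s * 2 ^ (d + (k - lw m s)) * Hmat m s t by rw [pow_add]; ring]
  rw [show (2:ℤ)^(d + (k - lw m s) - (k' - lw m s)) * u s * (2^(k' - lw m s) * Hmat m s t)
      = u s * (2 ^ (d + (k - lw m s) - (k' - lw m s)) * 2^(k' - lw m s)) * Hmat m s t by ring]
  rw [← pow_add, Nat.sub_add_cancel hle]

lemma lat_mono {m k k' : ℕ} (h : k' ≤ k) {x : Fin (2^m) → ℤ}
    (hx : x ∈ latticeOf (Gmat m k)) : x ∈ latticeOf (Gmat m k') := by
  have := lat_scale (d := 0) (k := k) (k' := k') (by omega) hx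
  rwa [pow_zero, one_smul] at this

lemma Gmat_top (m : ℕ) : Gmat m (m + 1) = (2 : ℤ) • Gmat m m := by
  ext s t
  rw [Matrix.smul_apply, Gmat_apply, Gmat_apply, smul_eq_mul]
  have := lw_le m s
  rw [show m + 1 - lw m s = (m - lw m s) + 1 by omega, pow_succ]
  ring

lemma lat_top {m : ℕ} {x : Fin (2^m) → ℤ} (hx : x ∈ latticeOf (Gmat m (m+1))) :
    ∃ b ∈ latticeOf (Gmat m m), x = (2:ℤ) • b := by
  obtain ⟨u, rfl⟩ := hx
  refine ⟨Matrix.vecMul u (Gmat m m), ⟨u, rfl⟩, ?_⟩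
  rw [Gmat_top]
  funext t
  simp only [Matrix.vecMul, dotProduct, Pi.smul_apply, Matrix.smul_apply, smul_eq_mul,
    Finset.mul_sum]
  exact Finset.sum_congr rfl fun s _ => by ring

/- vecMul/mulVec through reindex -/
lemma vecMul_reindex_apply {α β : Type*} [Fintype α] [Fintype β] [DecidableEq α] [DecidableEq β]
    (e : α ≃ β) (M : Matrix α α ℤ) (u : β → ℤ) (c : α) :
    Matrix.vecMul u (Matrix.reindex e e M) (e c) = Matrix.vecMul (u ∘ e) M c := by
  simp only [Matrix.vecMul, dotProduct, Matrix.reindex_apply, Matrix.submatrix_apply,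
    Equiv.symm_apply_apply]
  exact (Fintype.sum_equiv e (fun i => (u ∘ e) i * M i c)
    (fun i => u i * M (e.symm i) c) (fun i => by simp)).symm

lemma mulVec_reindex_apply {α β : Type*} [Fintype α] [Fintype β] [DecidableEq α] [DecidableEq β]
    (e : α ≃ β) (M : Matrix α α ℤ) (x : β → ℤ) (c : α) :
    (Matrix.reindex e e M).mulVec x (e c) = M.mulVec (x ∘ e) c := by
  simp only [Matrix.mulVec, dotProduct, Matrix.reindex_apply, Matrix.submatrix_apply,
    Equiv.symm_apply_apply]
  exact (Fintype.sum_equiv e (fun i => M c i * (x ∘ e) i)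
    (fun i => M c (e.symm i) * x i) (fun i => by simp)).symm

/-- membership in Λ(m+1,j) via components -/
lemma mem_lat_succ (m j : ℕ) (x : Fin (2^(m+1)) → ℤ) :
    x ∈ latticeOf (Gmat (m+1) j) ↔
      ((fun s => x (ee m (Sum.inl s))) ∈ latticeOf (Gmat m (j-1)) ∧
       (fun s => x (ee m (Sum.inr s)) - x (ee m (Sum.inl s))) ∈ latticeOf (Gmat m j)) := by
  constructor
  · rintro ⟨u, rfl⟩
    have h : ∀ c, Matrix.vecMul u (Gmat (m+1) j) (ee m c)
        = Matrix.vecMul (u ∘ ee m) (Matrix.fromBlocks (Gmat m (j-1)) (Gmat m (j-1)) 0 (Gmat m j)) c := by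
      intro c; rw [Gmat_succ_s18, vecMul_reindex_apply]
    simp only [h, Matrix.vecMul_fromBlocks, Sum.elim_inl, Sum.elim_inr, Matrix.vecMul_zero,
      add_zero, Pi.add_apply]
    constructor
    · exact ⟨(u ∘ ee m) ∘ Sum.inl, rfl⟩
    · exact ⟨(u ∘ ee m) ∘ Sum.inr, funext fun s => by ring⟩
  · rintro ⟨⟨u₁, h₁⟩, ⟨u₂, h₂⟩⟩
    refine ⟨Sum.elim u₁ u₂ ∘ (ee m).symm, funext fun i => ?_⟩
    obtain ⟨c, rfl⟩ := (ee m).surjective i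
    rw [Gmat_succ_s18, vecMul_reindex_apply]
    have he : (Sum.elim u₁ u₂ ∘ (ee m).symm) ∘ (ee m) = Sum.elim u₁ u₂ :=
      funext fun c => by simp
    rw [he, Matrix.vecMul_fromBlocks]
    simp only [Sum.elim_comp_inl, Sum.elim_comp_inr]
    cases c with
    | inl s =>
      have := congrFun h₁ s
      simp only [Sum.elim_inl, Matrix.vecMul_zero, add_zero, Pi.add_apply] at this ⊢
      exact this
    | inr s =>
      have e1 := congrFun h₁ s
      have e2 := congrFun h₂ s
      simp only [Sum.elim_inr, Pi.add_apply] at e1 e2 ⊢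
      rw [← e1]
      linarith [e2]

/-- Smat action via components -/
lemma mulVec_Smat_succ (m : ℕ) (x : Fin (2^(m+1)) → ℤ) (s : Fin (2^m)) :
    (Smat (m+1)).mulVec x (ee m (Sum.inl s))
      = (Smat m).mulVec (fun t => x (ee m (Sum.inl t))) s
        + (Smat m).mulVec (fun t => x (ee m (Sum.inr t))) s ∧
    (Smat (m+1)).mulVec x (ee m (Sum.inr s))
      = (Smat m).mulVec (fun t => x (ee m (Sum.inl t))) s
        - (Smat m).mulVec (fun t => x (ee m (Sum.inr t))) s := by
  have h : ∀ c, (Smat (m+1)).mulVec x (ee m c)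
      = (Matrix.fromBlocks (Smat m) (Smat m) (Smat m) (-(Smat m))).mulVec (x ∘ ee m) c := by
    intro c; rw [Smat_succ, mulVec_reindex_apply]
  rw [h, h, Matrix.fromBlocks_mulVec]
  simp only [Sum.elim_inl, Sum.elim_inr, Pi.add_apply, Matrix.neg_mulVec, Pi.neg_apply]
  constructor
  · rfl
  · rw [sub_eq_add_neg]; rfl

/- base case helpers -/
lemma fin_pow_zero_eq (i j' : Fin (2 ^ 0)) : i = j' := by
  have h1 : (2:ℕ) ^ 0 = 1 := pow_zero 2
  have := i.isLt; have := j'.isLt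
  exact Fin.ext (by omega)

lemma Smat_zero_mulVec (x : Fin (2 ^ 0) → ℤ) : (Smat 0).mulVec x = x := by
  funext i
  show ∑ t, Smat 0 i t * x t = x i
  have h1 : ∀ t, Smat 0 i t * x t = x t := fun t => by
    show (1:ℤ) * x t = x t; ring
  simp only [h1]
  exact Finset.sum_eq_single_of_mem i (Finset.mem_univ i)
    (fun b _ hb => absurd (fin_pow_zero_eq b i) hb)

lemma rowWeight_zero (s : Fin (2 ^ 0)) : rowWeight 0 s = 1 := by
  unfold rowWeight
  have : ∀ t : Fin (2^0), Hmat 0 s t ≠ 0 := fun t => by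
    show (1:ℤ) ≠ 0; norm_num
  rw [Finset.filter_true_of_mem (fun t _ => this t), Finset.card_univ, Fintype.card_fin,
    pow_zero]

lemma Gmat_zero_apply (j : ℕ) (s t : Fin (2 ^ 0)) : Gmat 0 j s t = 2 ^ j := by
  rw [Gmat_apply]
  have : lw 0 s = 0 := by unfold lw; rw [rowWeight_zero]; exact Nat.log_one_right 2
  rw [this, Nat.sub_zero]
  show (2:ℤ)^j * 1 = 2^j
  ring

lemma vecMul_Gmat_zero (j : ℕ) (u : Fin (2 ^ 0) → ℤ) (t : Fin (2 ^ 0)) :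
    Matrix.vecMul u (Gmat 0 j) t = 2 ^ j * u t := by
  show ∑ s, u s * Gmat 0 j s t = 2 ^ j * u t
  simp only [Gmat_zero_apply]
  rw [Finset.sum_eq_single_of_mem t (Finset.mem_univ t)
    (fun b _ hb => absurd (fin_pow_zero_eq b t) hb)]
  ring

lemma pow_cancel {n : ℕ} {A B : ℤ} (h : (2:ℤ) ^ n * A = 2 ^ n * B) : A = B :=
  mul_left_cancel₀ (pow_ne_zero n two_ne_zero) h

theorem main_aux : ∀ m j : ℕ,
    (∀ x ∈ latticeOf (Gmat m j), ∀ i, (2 : ℤ) ^ j ∣ (Smat m).mulVec x i) ∧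
    { y : Fin (2 ^ m) → ℤ |
        ∃ x ∈ latticeOf (Gmat m j), (2 : ℤ) ^ j • y = (Smat m).mulVec x }
      = latticeOf (Gmat m (m - j)) := by
  intro m
  induction m with
  | zero =>
    intro j
    constructor
    · rintro x ⟨u, rfl⟩ i
      rw [Smat_zero_mulVec, vecMul_Gmat_zero]
      exact Dvd.intro _ rfl
    · ext y
      simp only [Set.mem_setOf_eq]
      constructor
      · rintro ⟨x, hx, hy⟩
        refine ⟨y, funext fun t => ?_⟩
        rw [vecMul_Gmat_zero, Nat.zero_sub, pow_zero, one_mul]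
      · intro _
        refine ⟨(2:ℤ)^j • y, ⟨y, funext fun t => ?_⟩, by rw [Smat_zero_mulVec]⟩
        rw [vecMul_Gmat_zero]
        simp [mul_comm]
  | succ m ih =>
    intro j
    have key : ∀ k, ∀ a ∈ latticeOf (Gmat m k),
        ∃ v ∈ latticeOf (Gmat m (m - k)), (2:ℤ)^k • v = (Smat m).mulVec a := by
      intro k a ha
      have hdvd := (ih k).1 a ha
      have hv : (2:ℤ)^k • (fun s => ((Smat m).mulVec a s) / 2^k) = (Smat m).mulVec a :=
        funext fun s => by
          have := Int.mul_ediv_cancel' (hdvd s)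
          simpa using this
      exact ⟨_, by rw [← (ih k).2]; exact ⟨a, ha, hv⟩, hv⟩
    have key2 : ∀ k, ∀ w ∈ latticeOf (Gmat m (m - k)),
        ∃ b ∈ latticeOf (Gmat m k), (2:ℤ)^k • w = (Smat m).mulVec b := by
      intro k w hw
      rw [← (ih k).2] at hw
      exact hw
    constructor
    · -- divisibility
      rintro x hx i
      rw [mem_lat_succ] at hx
      obtain ⟨ha, hb⟩ := hx
      have hS := mulVec_Smat_succ m x
      have hx2 : (fun s => x (ee m (Sum.inr s)))
          = (fun s => x (ee m (Sum.inl s)))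
            + (fun s => x (ee m (Sum.inr s)) - x (ee m (Sum.inl s))) := by
        funext s; simp
      have d2 := (ih j).1 _ hb
      have d3 : ∀ s, (2:ℤ)^j ∣ 2 * (Smat m).mulVec (fun t => x (ee m (Sum.inl t))) s := by
        intro s
        rcases j with _ | k
        · rw [pow_zero]; exact one_dvd _
        · have d1 := (ih (k+1-1)).1 _ ha
          have d1' : (2:ℤ)^k ∣ (Smat m).mulVec (fun t => x (ee m (Sum.inl t))) s := by
            simpa using d1 s
          obtain ⟨z, hz⟩ := d1'
          exact ⟨z, by linear_combination 2 * hz⟩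
      obtain ⟨c, rfl⟩ := (ee m).surjective i
      cases c with
      | inl s =>
        rw [(hS s).1, hx2, Matrix.mulVec_add]
        obtain ⟨z1, hz1⟩ := d2 s
        obtain ⟨z2, hz2⟩ := d3 s
        exact ⟨z2 + z1, by rw [Pi.add_apply]; linear_combination hz2 + hz1⟩
      | inr s =>
        rw [(hS s).2, hx2, Matrix.mulVec_add]
        obtain ⟨z1, hz1⟩ := d2 s
        exact ⟨-z1, by rw [Pi.add_apply]; linear_combination -hz1⟩
    · ext y
      simp only [Set.mem_setOf_eq]
      constructor
      · -- forward inclusion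
        rintro ⟨x, hx, hyx⟩
        rw [mem_lat_succ] at hx
        obtain ⟨ha, hb⟩ := hx
        have hS := mulVec_Smat_succ m x
        have hx2 : (fun s => x (ee m (Sum.inr s)))
            = (fun s => x (ee m (Sum.inl s)))
              + (fun s => x (ee m (Sum.inr s)) - x (ee m (Sum.inl s))) := by
          funext s; simp
        rcases j with _ | k
        · -- j = 0
          obtain ⟨v, hv, hv2⟩ := key 0 _ (lat_mono (by omega) ha)
          obtain ⟨w, hw, hw2⟩ := key 0 _ (lat_mono (by omega) hb)
          have c1 : ∀ s, v s = (Smat m).mulVec (fun t => x (ee m (Sum.inl t))) s :=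
            fun s => by simpa using congrFun hv2 s
          have c2 : ∀ s, w s
              = (Smat m).mulVec (fun t => x (ee m (Sum.inr t)) - x (ee m (Sum.inl t))) s :=
            fun s => by simpa using congrFun hw2 s
          have hy1 : ∀ s, y (ee m (Sum.inl s))
              = (Smat m).mulVec (fun t => x (ee m (Sum.inl t))) s
                + ((Smat m).mulVec (fun t => x (ee m (Sum.inl t))) s
                  + (Smat m).mulVec (fun t => x (ee m (Sum.inr t)) - x (ee m (Sum.inl t))) s) := by
            intro s
            have h := congrFun hyx (ee m (Sum.inl s))
            rw [(hS s).1, hx2, Matrix.mulVec_add] at h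
            simpa using h
          have hy2 : ∀ s, y (ee m (Sum.inr s))
              = (Smat m).mulVec (fun t => x (ee m (Sum.inl t))) s
                - ((Smat m).mulVec (fun t => x (ee m (Sum.inl t))) s
                  + (Smat m).mulVec (fun t => x (ee m (Sum.inr t)) - x (ee m (Sum.inl t))) s) := by
            intro s
            have h := congrFun hyx (ee m (Sum.inr s))
            rw [(hS s).2, hx2, Matrix.mulVec_add] at h
            simpa using h
          rw [mem_lat_succ]
          constructor
          · have hfun : (fun s => y (ee m (Sum.inl s))) = v + (v + w) := funext fun s => by
              simp only [Pi.add_apply]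
              linear_combination hy1 s - 2 * c1 s - c2 s
            rw [hfun]
            exact lat_add (lat_mono (by omega) hv)
              (lat_add (lat_mono (by omega) hv) (lat_mono (by omega) hw))
          · have hfun2 : (fun s => y (ee m (Sum.inr s)) - y (ee m (Sum.inl s)))
                = (-1:ℤ) • ((2:ℤ)^1 • (v + w)) := funext fun s => by
              simp only [Pi.smul_apply, Pi.add_apply, smul_eq_mul]
              linear_combination hy2 s - hy1 s + 2 * c1 s + 2 * c2 s
            rw [hfun2]
            exact lat_smul _ (lat_scale (m := m) (k := m) (d := 1) (by omega)
              (lat_add (lat_mono (by omega) hv) (lat_mono (by omega) hw)))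
        · -- j = k + 1
          obtain ⟨v, hv, hv2⟩ := key k _ (lat_mono (by omega) ha)
          obtain ⟨w, hw, hw2⟩ := key (k+1) _ hb
          have c1 : ∀ s, (2:ℤ)^k * v s
              = (Smat m).mulVec (fun t => x (ee m (Sum.inl t))) s :=
            fun s => by simpa using congrFun hv2 s
          have c2 : ∀ s, (2:ℤ)^(k+1) * w s
              = (Smat m).mulVec (fun t => x (ee m (Sum.inr t)) - x (ee m (Sum.inl t))) s :=
            fun s => by simpa using congrFun hw2 s
          have hy1 : ∀ s, (2:ℤ)^(k+1) * y (ee m (Sum.inl s))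
              = (Smat m).mulVec (fun t => x (ee m (Sum.inl t))) s
                + ((Smat m).mulVec (fun t => x (ee m (Sum.inl t))) s
                  + (Smat m).mulVec (fun t => x (ee m (Sum.inr t)) - x (ee m (Sum.inl t))) s) := by
            intro s
            have h := congrFun hyx (ee m (Sum.inl s))
            rw [(hS s).1, hx2, Matrix.mulVec_add] at h
            simpa using h
          have hy2 : ∀ s, (2:ℤ)^(k+1) * y (ee m (Sum.inr s))
              = (Smat m).mulVec (fun t => x (ee m (Sum.inl t))) s
                - ((Smat m).mulVec (fun t => x (ee m (Sum.inl t))) s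
                  + (Smat m).mulVec (fun t => x (ee m (Sum.inr t)) - x (ee m (Sum.inl t))) s) := by
            intro s
            have h := congrFun hyx (ee m (Sum.inr s))
            rw [(hS s).2, hx2, Matrix.mulVec_add] at h
            simpa using h
          have hyl : ∀ s, y (ee m (Sum.inl s)) = v s + w s := fun s =>
            pow_cancel (n := k+1) (by linear_combination hy1 s - 2 * c1 s - c2 s)
          have hyr : ∀ s, y (ee m (Sum.inr s)) = -(w s) := fun s =>
            pow_cancel (n := k+1) (by linear_combination hy2 s + c2 s)
          rw [mem_lat_succ]
          constructor
          · have hfun : (fun s => y (ee m (Sum.inl s))) = v + w := funext fun s => by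
              simp only [Pi.add_apply]; exact hyl s
            rw [hfun]
            exact lat_add (lat_mono (by omega) hv) (lat_mono (by omega) hw)
          · have hfun2 : (fun s => y (ee m (Sum.inr s)) - y (ee m (Sum.inl s)))
                = (-1:ℤ) • (v + (2:ℤ)^1 • w) := funext fun s => by
              simp only [Pi.smul_apply, Pi.add_apply, smul_eq_mul]
              rw [hyl s, hyr s]; ring
            rw [hfun2]
            exact lat_smul _ (lat_add (lat_mono (by omega) hv)
              (lat_scale (m := m) (k := m - (k+1)) (d := 1) (by omega) hw))
      · -- reverse inclusion
        intro hy
        rw [mem_lat_succ] at hy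
        obtain ⟨hp, hq⟩ := hy
        rcases j with _ | k
        · -- j = 0
          obtain ⟨q0, hq0, hq02⟩ := lat_top (lat_mono (by omega) hq)
          have cq : ∀ s, y (ee m (Sum.inr s)) - y (ee m (Sum.inl s)) = 2 * q0 s :=
            fun s => by simpa using congrFun hq02 s
          have h1 : (fun s => y (ee m (Sum.inl s))) + q0 ∈ latticeOf (Gmat m (m - 0)) :=
            lat_add (lat_mono (by omega) hp) (lat_mono (by omega) hq0)
          obtain ⟨aa, haa, ha2⟩ := key2 0 _ h1
          have h2 : -((fun s => y (ee m (Sum.inl s)))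
              + (fun s => y (ee m (Sum.inr s)) - y (ee m (Sum.inl s))))
              ∈ latticeOf (Gmat m (m - 0)) :=
            lat_neg (lat_add (lat_mono (by omega) hp) (lat_mono (by omega) hq))
          obtain ⟨bb, hbb, hb2⟩ := key2 0 _ h2
          have ca : ∀ s, y (ee m (Sum.inl s)) + q0 s = (Smat m).mulVec aa s := fun s => by
            have := congrFun ha2 s
            simpa using this
          have cb : ∀ s, -(y (ee m (Sum.inl s))
              + (y (ee m (Sum.inr s)) - y (ee m (Sum.inl s)))) = (Smat m).mulVec bb s :=
            fun s => by
              have := congrFun hb2 s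
              simp only [Pi.smul_apply, Pi.neg_apply, Pi.add_apply, smul_eq_mul, pow_zero,
                one_mul] at this
              linear_combination this
          refine ⟨Sum.elim aa (aa + bb) ∘ (ee m).symm, ?_, ?_⟩
          · rw [mem_lat_succ]
            simp only [Function.comp_apply, Equiv.symm_apply_apply, Sum.elim_inl, Sum.elim_inr,
              Pi.add_apply, add_sub_cancel_left]
            exact ⟨lat_mono (by omega) haa, hbb⟩
          · funext i
            obtain ⟨c, rfl⟩ := (ee m).surjective i
            have hS := mulVec_Smat_succ m (Sum.elim aa (aa + bb) ∘ (ee m).symm)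
            have eil : (fun t => (Sum.elim aa (aa + bb) ∘ (ee m).symm) (ee m (Sum.inl t)))
                = aa := funext fun t => by simp
            have eir : (fun t => (Sum.elim aa (aa + bb) ∘ (ee m).symm) (ee m (Sum.inr t)))
                = aa + bb := funext fun t => by simp
            cases c with
            | inl s =>
              rw [(hS s).1, eil, eir, Matrix.mulVec_add]
              simp only [Pi.smul_apply, Pi.add_apply, smul_eq_mul, pow_zero, one_mul]
              linear_combination 2 * ca s + cb s + cq s
            | inr s =>
              rw [(hS s).2, eil, eir, Matrix.mulVec_add]
              simp only [Pi.smul_apply, Pi.add_apply, smul_eq_mul, pow_zero, one_mul]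
              linear_combination -(cb s)
        · -- j = k + 1
          have h1 : (2:ℤ)^1 • (fun s => y (ee m (Sum.inl s)))
              + (fun s => y (ee m (Sum.inr s)) - y (ee m (Sum.inl s)))
              ∈ latticeOf (Gmat m (m - k)) :=
            lat_add (lat_scale (by omega) hp) (lat_mono (by omega) hq)
          obtain ⟨aa, haa, ha2⟩ := key2 k _ h1
          have h2 : -((fun s => y (ee m (Sum.inl s)))
              + (fun s => y (ee m (Sum.inr s)) - y (ee m (Sum.inl s))))
              ∈ latticeOf (Gmat m (m - (k+1))) :=
            lat_neg (lat_add (lat_mono (by omega) hp) (lat_mono (by omega) hq))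
          obtain ⟨bb, hbb, hb2⟩ := key2 (k+1) _ h2
          have ca : ∀ s, (2:ℤ)^k * (2 * y (ee m (Sum.inl s))
              + (y (ee m (Sum.inr s)) - y (ee m (Sum.inl s)))) = (Smat m).mulVec aa s :=
            fun s => by
              have := congrFun ha2 s
              simp only [Pi.smul_apply, Pi.add_apply, smul_eq_mul, pow_one] at this
              linear_combination this
          have cb : ∀ s, (2:ℤ)^(k+1) * (-(y (ee m (Sum.inl s))
              + (y (ee m (Sum.inr s)) - y (ee m (Sum.inl s))))) = (Smat m).mulVec bb s :=
            fun s => by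
              have := congrFun hb2 s
              simp only [Pi.smul_apply, Pi.neg_apply, Pi.add_apply, smul_eq_mul] at this
              linear_combination this
          refine ⟨Sum.elim aa (aa + bb) ∘ (ee m).symm, ?_, ?_⟩
          · rw [mem_lat_succ]
            simp only [Function.comp_apply, Equiv.symm_apply_apply, Sum.elim_inl, Sum.elim_inr,
              Pi.add_apply, add_sub_cancel_left]
            exact ⟨lat_mono (by omega) haa, hbb⟩
          · funext i
            obtain ⟨c, rfl⟩ := (ee m).surjective i
            have hS := mulVec_Smat_succ m (Sum.elim aa (aa + bb) ∘ (ee m).symm)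
            have eil : (fun t => (Sum.elim aa (aa + bb) ∘ (ee m).symm) (ee m (Sum.inl t)))
                = aa := funext fun t => by simp
            have eir : (fun t => (Sum.elim aa (aa + bb) ∘ (ee m).symm) (ee m (Sum.inr t)))
                = aa + bb := funext fun t => by simp
            cases c with
            | inl s =>
              rw [(hS s).1, eil, eir, Matrix.mulVec_add]
              simp only [Pi.smul_apply, Pi.add_apply, smul_eq_mul]
              linear_combination 2 * ca s + cb s
            | inr s =>
              rw [(hS s).2, eil, eir, Matrix.mulVec_add]
              simp only [Pi.smul_apply, Pi.add_apply, smul_eq_mul]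
              linear_combination -(cb s)

/-- For every `x ∈ Λ(m, j)`, every entry of `𝓗ₘ · x` is divisible by `2^j`, and
the image of `Λ(m, j)` under `x ↦ (1/2^j) · 𝓗ₘ · x` equals `Λ(m, m−j)`. -/
theorem transform_Gmj_eq_Gm_sub_j (m j : ℕ) (hj : j ≤ m) :
    (∀ x ∈ latticeOf (Gmat m j), ∀ i, (2 : ℤ) ^ j ∣ (Smat m).mulVec x i) ∧
    { y : Fin (2 ^ m) → ℤ |
        ∃ x ∈ latticeOf (Gmat m j), (2 : ℤ) ^ j • y = (Smat m).mulVec x }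
      = latticeOf (Gmat m (m - j)) := main_aux m j
end
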